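/- Let Y_{n,j} be the out-degree of node j in a random ordered increasing k-tree of size n. Then P{Y_{n,j} = m} = binom(j - k/(k+1), j) / [binom(n - k/(k+1), n)·binom(n,j)] · ∑_{ℓ=0}^{m} binom(m,ℓ)(-1)^ℓ binom(n - k(2+ℓ)/(k+1), n-j), for n ≥ j ≥ 1 and m ≥ 0. -/

import Mathlib

/-- Generalized binomial coefficient `binom(x, n) = x(x-1)⋯(x-n+1)/n!`. -/
noncomputable def gbinom (x : ℝ) (n : ℕ) : ℝ :=
  (∏ i ∈ Finset.range n, (x - i)) / (Nat.factorial n)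

/-- `T_n = ∏_{ℓ=0}^{n-1}(1+(k+1)ℓ)`, the number of ordered increasing `k`-trees of size `n`. -/
noncomputable def Tcount (k n : ℕ) : ℝ :=
  ∏ ℓ ∈ Finset.range n, (1 + ((k : ℝ) + 1) * ℓ)

/-!
Both sides obey the same recurrence in `n ≥ j` and agree at `n = j`. Writing `a = k/(k+1)`,
one has `T_n = (k+1)^n n! binom(n - a, n)`, so the prefactor of the formula collapses to
`T_j (k+1)^(n-j) (n-j)!` and gains the factor `(k+1)(n+1-j)` from `n` to `n+1`. The alternating
sum absorbs that factor and produces the recurrence, by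
`binom(x+1, r+1) = (x+1)/(r+1) binom(x, r)` termwise and `(m-ℓ) binom(m,ℓ) = m binom(m-1,ℓ)`.
-/

open Finset

@[simp]
lemma gbinom_zero (x : ℝ) : gbinom x 0 = 1 := by simp [gbinom]

lemma gbinom_succ (x : ℝ) (r : ℕ) : gbinom x (r + 1) = x / (r + 1) * gbinom (x - 1) r := by
  have hshift : ∀ i ∈ range r, x - ((i + 1 : ℕ) : ℝ) = (x - 1) - i := by
    intro i _; push_cast; ring
  rw [gbinom, gbinom, prod_range_succ', prod_congr rfl hshift, Nat.factorial_succ]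
  push_cast
  field_simp
  ring

lemma gbinom_pos {x : ℝ} {n : ℕ} (hx : (n : ℝ) - 1 < x) : 0 < gbinom x n := by
  refine div_pos (prod_pos fun i hi ↦ ?_) (by positivity)
  have : (i : ℝ) + 1 ≤ n := by exact_mod_cast mem_range.mp hi
  linarith

lemma Tcount_succ (k n : ℕ) : Tcount k (n + 1) = Tcount k n * (1 + ((k : ℝ) + 1) * n) :=
  prod_range_succ _ n

/-- Factor by factor, `1 + (k+1)ℓ = (k+1)(ℓ + 1 - k/(k+1))`. -/
lemma Tcount_eq_pow_mul_factorial_mul_gbinom (k n : ℕ) :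
    Tcount k n = ((k : ℝ) + 1) ^ n * n.factorial * gbinom ((n : ℝ) - k / (k + 1)) n := by
  induction n with
  | zero => simp [Tcount]
  | succ n ih =>
    have hshift : ((n + 1 : ℕ) : ℝ) - k / (k + 1) - 1 = n - k / (k + 1) := by push_cast; ring
    rw [Tcount_succ, ih, gbinom_succ, hshift, Nat.factorial_succ]
    push_cast
    field_simp
    ring

lemma Tcount_mul_gbinom_div_choose (k : ℕ) {n j : ℕ} (hjn : j ≤ n) :
    Tcount k n * (gbinom ((j : ℝ) - k / (k + 1)) j
        / (gbinom ((n : ℝ) - k / (k + 1)) n * (n.choose j : ℝ)))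
      = Tcount k j * ((k : ℝ) + 1) ^ (n - j) * (n - j).factorial := by
  have hk : (k : ℝ) / (k + 1) < 1 := (div_lt_one (by positivity)).mpr (by linarith)
  have hB : gbinom ((n : ℝ) - k / (k + 1)) n ≠ 0 := (gbinom_pos (by linarith)).ne'
  have hchoose : (n.choose j : ℝ) * j.factorial * (n - j).factorial = n.factorial := by
    exact_mod_cast Nat.choose_mul_factorial_mul_factorial hjn
  have hpow : ((k : ℝ) + 1) ^ n = ((k : ℝ) + 1) ^ j * ((k : ℝ) + 1) ^ (n - j) := by
    rw [← pow_add, Nat.add_sub_cancel' hjn]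
  have hC : (n.choose j : ℝ) ≠ 0 := by exact_mod_cast (Nat.choose_pos hjn).ne'
  rw [Tcount_eq_pow_mul_factorial_mul_gbinom, Tcount_eq_pow_mul_factorial_mul_gbinom, hpow,
    ← hchoose]
  generalize gbinom ((n : ℝ) - k / (k + 1)) n = B at hB ⊢
  field_simp

lemma sum_range_choose_mul_neg_one_pow (m : ℕ) :
    ∑ ℓ ∈ range (m + 1), (m.choose ℓ : ℝ) * (-1) ^ ℓ = if m = 0 then 1 else 0 := by
  have := Int.alternating_sum_range_choose (n := m)
  simp only [mul_comm ((-1 : ℤ) ^ _)] at this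
  exact_mod_cast this

lemma sum_range_sub_mul_choose (m : ℕ) (x : ℕ → ℝ) :
    ∑ ℓ ∈ range (m + 1), ((m : ℝ) - ℓ) * m.choose ℓ * x ℓ
      = m * ∑ ℓ ∈ range (m - 1 + 1), ((m - 1).choose ℓ : ℝ) * x ℓ := by
  cases m with
  | zero => simp
  | succ m =>
    rw [sum_range_succ, Nat.add_sub_cancel, mul_sum]
    simp only [sub_self, zero_mul, add_zero]
    refine sum_congr rfl fun ℓ hℓ ↦ ?_
    have hℓ : ℓ ≤ m + 1 := by linarith [mem_range.mp hℓ]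
    have hchoose : ((m + 1).choose ℓ : ℝ) * (m + 1 - ℓ : ℕ) = m.choose ℓ * (m + 1 : ℕ) := by
      exact_mod_cast (Nat.choose_mul_succ_eq m ℓ).symm
    rw [Nat.cast_sub hℓ] at hchoose
    push_cast at hchoose ⊢
    linear_combination x ℓ * hchoose

lemma sum_choose_neg_one_pow_mul_sub_mul (m : ℕ) (G : ℕ → ℝ) (c d : ℝ) :
    ∑ ℓ ∈ range (m + 1), (m.choose ℓ : ℝ) * (-1) ^ ℓ * ((c - d * ℓ) * G ℓ)
      = (c - d * m) * ∑ ℓ ∈ range (m + 1), (m.choose ℓ : ℝ) * (-1) ^ ℓ * G ℓ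
        + d * m * ∑ ℓ ∈ range (m - 1 + 1), ((m - 1).choose ℓ : ℝ) * (-1) ^ ℓ * G ℓ := by
  have hsplit := sum_range_sub_mul_choose m (fun ℓ ↦ (-1) ^ ℓ * G ℓ)
  simp only [← mul_assoc] at hsplit
  rw [mul_assoc d, ← hsplit, mul_sum, mul_sum, ← sum_add_distrib]
  exact sum_congr rfl fun ℓ _ ↦ by ring

noncomputable def outdegreeSum (k n j m : ℕ) : ℝ :=
  ∑ ℓ ∈ range (m + 1),
    (m.choose ℓ : ℝ) * (-1) ^ ℓ * gbinom ((n : ℝ) - (k : ℝ) * (2 + ℓ) / (k + 1)) (n - j)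

lemma outdegreeSum_self (k j m : ℕ) : outdegreeSum k j j m = if m = 0 then 1 else 0 := by
  simp [outdegreeSum, sum_range_choose_mul_neg_one_pow]

lemma outdegreeSum_succ (k : ℕ) {n j : ℕ} (hjn : j ≤ n) (m : ℕ) :
    ((k : ℝ) + 1) * ((n - j : ℕ) + 1) * outdegreeSum k (n + 1) j m
      = (((k : ℝ) + 1) * (n + 1) - k * m - 2 * k) * outdegreeSum k n j m
        + k * m * outdegreeSum k n j (m - 1) := by
  have hterm : ∀ ℓ : ℕ, ((k : ℝ) + 1) * ((n - j : ℕ) + 1)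
        * gbinom (((n + 1 : ℕ) : ℝ) - k * (2 + ℓ) / (k + 1)) (n + 1 - j)
      = ((((k : ℝ) + 1) * (n + 1) - 2 * k) - k * ℓ)
        * gbinom ((n : ℝ) - k * (2 + ℓ) / (k + 1)) (n - j) := by
    intro ℓ
    have hshift : ((n + 1 : ℕ) : ℝ) - k * (2 + ℓ) / (k + 1) - 1 = n - k * (2 + ℓ) / (k + 1) := by
      push_cast; ring
    rw [Nat.succ_sub hjn, gbinom_succ, hshift]
    field_simp
    push_cast
    ring
  rw [outdegreeSum, mul_sum]
  calc _ = ∑ ℓ ∈ range (m + 1), (m.choose ℓ : ℝ) * (-1) ^ ℓ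
        * (((((k : ℝ) + 1) * (n + 1) - 2 * k) - k * ℓ)
          * gbinom ((n : ℝ) - k * (2 + ℓ) / (k + 1)) (n - j)) :=
        sum_congr rfl fun ℓ _ ↦ by rw [← hterm]; ring
    _ = _ := by rw [sum_choose_neg_one_pow_mul_sub_mul, outdegreeSum, outdegreeSum]; ring

theorem ktree_outdegree_dist (k : ℕ) (f : ℕ → ℕ → ℕ → ℝ)
    (hrec : ∀ n j m : ℕ, j < n → 1 ≤ j →
      f n j m = (((k : ℝ) + 1) * n - (k : ℝ) * m - 2 * k) * f (n - 1) j m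
        + (k : ℝ) * m * f (n - 1) j (m - 1))
    (hinit0 : ∀ j : ℕ, 1 ≤ j → f j j 0 = Tcount k j)
    (hinit : ∀ j m : ℕ, 1 ≤ j → 1 ≤ m → f j j m = 0)
    (n j m : ℕ) (h1 : 1 ≤ j) (h2 : j ≤ n) :
    f n j m = Tcount k n *
      (gbinom ((j : ℝ) - k / (k + 1)) j
        / (gbinom ((n : ℝ) - k / (k + 1)) n * (Nat.choose n j : ℝ))
        * ∑ ℓ ∈ Finset.range (m + 1),
            (Nat.choose m ℓ : ℝ) * (-1) ^ ℓ
              * gbinom ((n : ℝ) - (k : ℝ) * (2 + ℓ) / (k + 1)) (n - j)) := by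
  rw [← mul_assoc, Tcount_mul_gbinom_div_choose k h2, ← outdegreeSum]
  induction n, h2 using Nat.le_induction generalizing m with
  | base =>
    rw [outdegreeSum_self]
    rcases Nat.eq_zero_or_pos m with rfl | hm
    · simp [hinit0 j h1]
    · simp [hinit j m h1 hm, hm.ne']
  | succ n hjn ih =>
    rw [hrec (n + 1) j m (by omega) h1, Nat.add_sub_cancel, ih m, ih (m - 1), Nat.succ_sub hjn,
      pow_succ, Nat.factorial_succ]
    push_cast
    linear_combination -Tcount k j * ((k : ℝ) + 1) ^ (n - j) * (n - j).factorial
      * outdegreeSum_succ k hjn m
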